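/- Let L be a distributive lattice, I a finite set, and for each i ∈ I let M_i be a finite distributive lattice, Ω_i a nonempty finite set of lattice homomorphisms M_i → 2, and X_i a set of lattice homomorphisms L → M_i that is closed in the product topology on M_i^L (M_i discrete). Then the family of composites {ω ∘ x : i ∈ I, x ∈ X_i, ω ∈ Ω_i} separates the points of L if and only if every lattice homomorphism y : L → 2 other than the two constant maps is of the form ω ∘ x for some i ∈ I, x ∈ X_i and ω ∈ Ω_i. -/
import Mathlib


/-- A map between lattices preserving binary joins and meets (no bound constants
in the language). -/
def IsLatHom {α β : Type*} [Lattice α] [Lattice β] (f : α → β) : Prop :=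
  (∀ a b, f (a ⊔ b) = f a ⊔ f b) ∧ (∀ a b, f (a ⊓ b) = f a ⊓ f b)

theorem latHom_mono {α β : Type*} [Lattice α] [Lattice β] {f : α → β}
    (hf : IsLatHom f) : Monotone f := by
  intro c d h
  have h2 := hf.2 c d
  rw [inf_eq_left.mpr h] at h2
  exact h2.trans_le inf_le_right

/-- Bundle an `IsLatHom` as a `LatticeHom`. -/
def toLatticeHom {α β : Type*} [Lattice α] [Lattice β] (f : α → β) (hf : IsLatHom f) :
    LatticeHom α β :=
  { toFun := f, map_sup' := hf.1, map_inf' := hf.2 }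

/-- Prime-filter separation: in a distributive lattice, if `¬ a ≤ b`, there is a
lattice homomorphism into `Bool` sending `a` to `true` and `b` to `false`. -/
theorem exists_bool_hom_of_not_le {L : Type*} [DistribLattice L] {a b : L}
    (h : ¬ a ≤ b) :
    ∃ y : L → Bool, IsLatHom y ∧ y a = true ∧ y b = false := by
  classical
  set L' := WithBot (WithTop L)
  let e : L → L' := fun c => ((c : WithTop L) : L')
  have he_le : ∀ {c d : L}, e c ≤ e d ↔ c ≤ d := by
    intro c d
    rw [WithBot.coe_le_coe, WithTop.coe_le_coe]
  have he_sup : ∀ c d : L, e (c ⊔ d) = e c ⊔ e d := by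
    intro c d; simp only [e, WithTop.coe_sup, WithBot.coe_sup]
  have he_inf : ∀ c d : L, e (c ⊓ d) = e c ⊓ e d := by
    intro c d; simp only [e, WithTop.coe_inf, WithBot.coe_inf]
  have hdisj : Disjoint ((Order.PFilter.principal (e a) : Order.PFilter L') : Set L')
      ((Order.Ideal.principal (e b) : Order.Ideal L') : Set L') := by
    rw [Set.disjoint_left]
    rintro c hc1 hc2
    exact h (he_le.mp (le_trans (hc1 : e a ≤ c) (hc2 : c ≤ e b)))
  obtain ⟨J, hJprime, hIJ, hFJ⟩ :=
    DistribLattice.prime_ideal_of_disjoint_filter_ideal hdisj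
  refine ⟨fun c => decide (e c ∉ J), ⟨?_, ?_⟩, ?_, ?_⟩
  · intro c d
    have : e (c ⊔ d) ∈ J ↔ e c ∈ J ∧ e d ∈ J := by
      rw [he_sup]
      constructor
      · intro hm; exact ⟨J.lower le_sup_left hm, J.lower le_sup_right hm⟩
      · rintro ⟨h1, h2⟩; exact J.sup_mem h1 h2
    by_cases h1 : e c ∈ J <;> by_cases h2 : e d ∈ J <;> simp_all
  · intro c d
    have : e (c ⊓ d) ∈ J ↔ e c ∈ J ∨ e d ∈ J := by
      rw [he_inf]
      constructor
      · exact hJprime.mem_or_mem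
      · rintro (h1 | h1)
        · exact J.lower inf_le_left h1
        · exact J.lower inf_le_right h1
    by_cases h1 : e c ∈ J <;> by_cases h2 : e d ∈ J <;> simp_all
  · have : e a ∉ J := by
      intro hm
      exact Set.disjoint_left.mp hFJ (Order.PFilter.mem_principal.mpr le_rfl) hm
    simpa using this
  · have : e b ∈ J := hIJ (Order.Ideal.mem_principal.mpr le_rfl)
    simpa using this

/-- Restricted joint surjectivity, (2)⇔(3), at the level of lattice
reducts.  Let `L` be a distributive lattice, `I` a finite set, and for each `i ∈ I` let
`M i` be a finite distributive lattice, `Ω i` a nonempty finite set of lattice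
homomorphisms `M i → 2`, and `X i` a set of lattice homomorphisms `L → M i` closed in
the product topology on `(M i)^L` (`M i` discrete).  Then the composites `ω ∘ x`
separate the points of `L` iff every lattice homomorphism `y : L → 2` other than the
two constant maps has the form `ω ∘ x` with `i ∈ I`, `x ∈ X i`, `ω ∈ Ω i`. -/
theorem restricted_joint_surjectivity
    (L : Type*) [DistribLattice L]
    (I : Type*) [Finite I]
    (M : I → Type*) [∀ i, DistribLattice (M i)] [∀ i, Finite (M i)]
    [∀ i, TopologicalSpace (M i)] [∀ i, DiscreteTopology (M i)]
    (Ω : ∀ i, Set (M i → Bool))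
    (hΩhom : ∀ i, ∀ ω ∈ Ω i, IsLatHom ω)
    (hΩfin : ∀ i, (Ω i).Finite)
    (hΩne : ∀ i, (Ω i).Nonempty)
    (X : ∀ i, Set (L → M i))
    (hXhom : ∀ i, ∀ x ∈ X i, IsLatHom x)
    (hXcl : ∀ i, IsClosed (X i)) :
    (∀ a b : L, a ≠ b → ∃ i, ∃ x ∈ X i, ∃ ω ∈ Ω i, ω (x a) ≠ ω (x b)) ↔
      (∀ y : L → Bool, IsLatHom y →
        y ≠ (fun _ => false) → y ≠ (fun _ => true) →
        ∃ i, ∃ x ∈ X i, ∃ ω ∈ Ω i, y = ω ∘ x) := by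
  classical
  constructor
  · -- separation → restricted surjectivity
    intro hsep y hy hyf hyt
    obtain ⟨a, ha⟩ : ∃ a, y a = true := by
      obtain ⟨a, ha⟩ := Function.ne_iff.mp hyf
      exact ⟨a, by simpa using ha⟩
    obtain ⟨b, hb⟩ : ∃ b, y b = false := by
      obtain ⟨b, hb⟩ := Function.ne_iff.mp hyt
      exact ⟨b, by simpa using hb⟩
    have booltrue : ∀ u : Bool, true ≤ u → u = true := by decide
    have boolfalse : ∀ u : Bool, u ≤ false → u = false := by decide
    -- Step A: finite agreement
    have stepA : ∀ S : Finset L, ∃ i, ∃ x ∈ X i, ∃ ω ∈ Ω i,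
        ∀ s ∈ S, ω (x s) = y s := by
      intro S
      set T : Finset L := insert a (insert b S) with hT
      set St : Finset L := T.filter (fun s => y s = true) with hSt
      set Sf : Finset L := T.filter (fun s => y s = false) with hSf
      have hStne : St.Nonempty :=
        ⟨a, Finset.mem_filter.mpr ⟨Finset.mem_insert_self _ _, ha⟩⟩
      have hSfne : Sf.Nonempty :=
        ⟨b, Finset.mem_filter.mpr
          ⟨Finset.mem_insert_of_mem (Finset.mem_insert_self _ _), hb⟩⟩
      set a0 : L := St.inf' hStne id with ha0def
      set b0 : L := Sf.sup' hSfne id with hb0def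
      have hya0 : y a0 = true := by
        have h1 : y a0 = St.inf' hStne (y ∘ id) :=
          map_finset_inf' (toLatticeHom y hy) hStne id
        refine booltrue _ ?_
        rw [h1]
        exact Finset.le_inf' hStne _ fun s hs =>
          ((Finset.mem_filter.mp hs).2).ge
      have hyb0 : y b0 = false := by
        have h1 : y b0 = Sf.sup' hSfne (y ∘ id) :=
          map_finset_sup' (toLatticeHom y hy) hSfne id
        refine boolfalse _ ?_
        rw [h1]
        exact Finset.sup'_le hSfne _ fun s hs =>
          ((Finset.mem_filter.mp hs).2).le
      have hnle : ¬ a0 ≤ b0 := by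
        intro hle
        have := latHom_mono hy hle
        rw [hya0, hyb0] at this
        exact (by decide : ¬ (true : Bool) ≤ false) this
      have hne2 : a0 ≠ a0 ⊓ b0 := fun hEq => hnle (inf_eq_left.mp hEq.symm)
      obtain ⟨i, x, hx, ω, hω, hdiff⟩ := hsep a0 (a0 ⊓ b0) hne2
      set z : L → Bool := fun c => ω (x c) with hz
      have hzhom : IsLatHom z := by
        constructor
        · intro c d
          simp only [z, (hXhom i x hx).1, (hΩhom i ω hω).1]
        · intro c d
          simp only [z, (hXhom i x hx).2, (hΩhom i ω hω).2]
      have key : ∀ u v : Bool, u ≠ u ⊓ v → u = true ∧ v = false := by decide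
      have h3 : z a0 ≠ z a0 ⊓ z b0 := by
        rw [← hzhom.2]
        exact hdiff
      obtain ⟨hza0, hzb0⟩ := key _ _ h3
      refine ⟨i, x, hx, ω, hω, fun s hs => ?_⟩
      have hsT : s ∈ T := Finset.mem_insert_of_mem
        (Finset.mem_insert_of_mem hs)
      show z s = y s
      cases hys : y s with
      | true =>
        have hsSt : s ∈ St := Finset.mem_filter.mpr ⟨hsT, hys⟩
        have : a0 ≤ s := Finset.inf'_le id hsSt
        have := latHom_mono hzhom this
        rw [hza0] at this
        exact booltrue _ this
      | false =>
        have hsSf : s ∈ Sf := Finset.mem_filter.mpr ⟨hsT, hys⟩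
        have : s ≤ b0 := Finset.le_sup' id hsSf
        have := latHom_mono hzhom this
        rw [hzb0] at this
        exact boolfalse _ this
    -- Step B: pigeonhole to a single pair (i, ω)
    haveI : ∀ i, Finite (Ω i) := fun i => (hΩfin i).to_subtype
    obtain ⟨⟨i, ω, hω⟩, hgood⟩ :
        ∃ p : (i : I) × {ω : M i → Bool // ω ∈ Ω i},
          ∀ S : Finset L, ∃ x ∈ X p.1, ∀ s ∈ S, p.2.1 (x s) = y s := by
      by_contra hcon
      push_neg at hcon
      choose f hf using hcon
      haveI : Fintype ((i : I) × {ω : M i → Bool // ω ∈ Ω i}) := Fintype.ofFinite _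
      set U : Finset L := Finset.univ.sup f with hU
      obtain ⟨i, x, hx, ω, hω, hagree⟩ := stepA U
      obtain ⟨s, hsf, hne⟩ := hf ⟨i, ω, hω⟩ x hx
      exact hne (hagree s (Finset.le_sup (f := f) (Finset.mem_univ ⟨i, ω, hω⟩) hsf))
    -- Step C: compactness
    haveI : CompactSpace (L → M i) := inferInstance
    set C : Finset L → Set (L → M i) :=
      fun S => X i ∩ {x | ∀ s ∈ S, ω (x s) = y s} with hC
    have hCne : ∀ S, (C S).Nonempty := fun S => by
      obtain ⟨x, hx, hxa⟩ := hgood S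
      exact ⟨x, hx, hxa⟩
    have hCcl : ∀ S, IsClosed (C S) := fun S => by
      refine (hXcl i).inter ?_
      have heq : {x : L → M i | ∀ s ∈ S, ω (x s) = y s}
          = ⋂ s ∈ S, (fun x : L → M i => x s) ⁻¹' {m | ω m = y s} := by
        ext x; simp
      rw [heq]
      exact isClosed_biInter fun s _ =>
        (isClosed_discrete _).preimage (continuous_apply s)
    have hCcp : ∀ S, IsCompact (C S) := fun S => (hCcl S).isCompact
    have hdir : Directed (· ⊇ ·) C := by
      intro S T
      refine ⟨S ∪ T, fun x hx => ⟨hx.1, fun s hs => hx.2 s ?_⟩,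
        fun x hx => ⟨hx.1, fun s hs => hx.2 s ?_⟩⟩
      · exact Finset.mem_union_left _ hs
      · exact Finset.mem_union_right _ hs
    obtain ⟨x, hxall⟩ :=
      IsCompact.nonempty_iInter_of_directed_nonempty_isCompact_isClosed
        C hdir hCne hCcp hCcl
    have hxX : x ∈ X i := (Set.mem_iInter.mp hxall ∅).1
    refine ⟨i, x, hxX, ω, hω, funext fun l => ?_⟩
    exact ((Set.mem_iInter.mp hxall {l}).2 l (Finset.mem_singleton_self l)).symm
  · -- restricted surjectivity → separation
    intro hrhs a b hab
    have hcase : ¬ a ≤ b ∨ ¬ b ≤ a := by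
      by_contra h
      push_neg at h
      exact hab (le_antisymm h.1 h.2)
    have main : ∀ c d : L, ¬ c ≤ d →
        ∃ i, ∃ x ∈ X i, ∃ ω ∈ Ω i, ω (x c) ≠ ω (x d) := by
      intro c d h
      obtain ⟨y, hy, hyc, hyd⟩ := exists_bool_hom_of_not_le h
      have hyf : y ≠ fun _ => false := fun hc => by
        rw [hc] at hyc; simp at hyc
      have hyt : y ≠ fun _ => true := fun hc => by
        rw [hc] at hyd; simp at hyd
      obtain ⟨i, x, hx, ω, hω, heq⟩ := hrhs y hy hyf hyt
      refine ⟨i, x, hx, ω, hω, ?_⟩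
      have h1 : ω (x c) = y c := (congrFun heq c).symm
      have h2 : ω (x d) = y d := (congrFun heq d).symm
      rw [h1, h2, hyc, hyd]
      decide
    rcases hcase with h | h
    · exact main a b h
    · obtain ⟨i, x, hx, ω, hω, hne⟩ := main b a h
      exact ⟨i, x, hx, ω, hω, hne.symm⟩
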